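/- arXiv:2107.02060 — 4 statements merged into one kernel-verified Lean document; each statement's English description precedes it below -/
import Mathlib

section
/- Let p₁, …, pₙ be distinct primes each congruent to 1 mod 4, and write pⱼ = aⱼ² + bⱼ² with aⱼ, bⱼ positive integers. Define qⱼ = (aⱼ + i bⱼ)/(aⱼ − i bⱼ), a complex number of modulus 1 with rational real and imaginary parts. Then the qⱼ are multiplicatively independent over ℤ: if q₁^{e₁} ⋯ qₙ^{eₙ} = 1 with eⱼ ∈ ℤ, then e₁ = ⋯ = eₙ = 0. -/
/-!
Put `zⱼ = aⱼ + bⱼ i ∈ ℤ[i]`. Since `N(zⱼ) = pⱼ` is prime, each `zⱼ` is a Gaussian prime, and it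
divides none of `z_k` (`k ≠ j`) and none of the conjugates `z̄_k`: the norms differ, except for
`z̄ⱼ`, where `zⱼ ∣ z̄ⱼ` would give `zⱼ ∣ zⱼ + z̄ⱼ = 2aⱼ`, hence `pⱼ ∣ aⱼ` as `pⱼ` is odd, then
`pⱼ ∣ bⱼ`, and finally `pⱼ² ∣ aⱼ² + bⱼ² = pⱼ`.
Splitting each `eⱼ` into its positive and negative parts turns `∏ qⱼ^eⱼ = 1` into an equality
of two products of the `zⱼ` and `z̄ⱼ` in `ℤ[i]`; comparing the multiplicity of `zⱼ` on the two
sides shows that both parts of `eⱼ` agree.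
-/

section PrimePowers

variable {M : Type*} [CommMonoidWithZero M] [IsCancelMulZero M]

theorem Prime.eq_of_pow_mul_eq_pow_mul {π A B : M} {m n : ℕ} (hπ : Prime π) (hA : ¬π ∣ A)
    (hB : ¬π ∣ B) (h : π ^ m * A = π ^ n * B) : m = n := by
  simpa [emultiplicity_mul hπ, emultiplicity_pow_self_of_prime hπ, emultiplicity_eq_zero.2 hA,
    emultiplicity_eq_zero.2 hB] using congrArg (emultiplicity π) h

theorem eq_of_prod_pow_mul_prod_pow_eq {ι : Type*} [Fintype ι] {x y : ι → M} {f g : ι → ℕ}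
    (hx : ∀ j, Prime (x j)) (hxx : Pairwise fun j k => ¬x j ∣ x k) (hxy : ∀ j k, ¬x j ∣ y k)
    (h : (∏ j, x j ^ f j) * ∏ j, y j ^ g j = (∏ j, x j ^ g j) * ∏ j, y j ^ f j) (k : ι) :
    f k = g k := by
  classical
  have split (m n : ι → ℕ) : (∏ j, x j ^ m j) * ∏ j, y j ^ n j =
      x k ^ m k * ((∏ j ∈ Finset.univ.erase k, x j ^ m j) * ∏ j, y j ^ n j) := by
    rw [← Finset.mul_prod_erase _ _ (Finset.mem_univ k), mul_assoc]
  have not_dvd (m n : ι → ℕ) :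
      ¬x k ∣ (∏ j ∈ Finset.univ.erase k, x j ^ m j) * ∏ j, y j ^ n j := by
    rw [(hx k).dvd_mul, not_or]
    exact ⟨(hx k).not_dvd_finsetProd fun j hj hd =>
        hxx (Finset.ne_of_mem_erase hj).symm ((hx k).dvd_of_dvd_pow hd),
      (hx k).not_dvd_finsetProd fun j _ hd => hxy k j ((hx k).dvd_of_dvd_pow hd)⟩
  rw [split, split] at h
  exact (hx k).eq_of_pow_mul_eq_pow_mul (not_dvd f g) (not_dvd g f) h

end PrimePowers

theorem div_zpow_eq_pow_toNat_div {K : Type*} [Field K] {a b : K} (ha : a ≠ 0) (hb : b ≠ 0)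
    (e : ℤ) : (a / b) ^ e = a ^ e.toNat * b ^ (-e).toNat / (a ^ (-e).toNat * b ^ e.toNat) := by
  conv_lhs => rw [← e.toNat_sub_toNat_neg]
  rw [zpow_sub₀ (div_ne_zero ha hb), zpow_natCast, zpow_natCast, div_pow, div_pow]
  field_simp

theorem eq_zero_of_prod_div_zpow_eq_one {R K ι : Type*} [CommRing R] [IsDomain R] [Field K]
    [Fintype ι] (φ : R →+* K) (hφ : Function.Injective φ) {x y : ι → R}
    (hx : ∀ j, Prime (x j)) (hxx : Pairwise fun j k => ¬x j ∣ x k) (hxy : ∀ j k, ¬x j ∣ y k)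
    {e : ι → ℤ} (h : ∏ j, (φ (x j) / φ (y j)) ^ e j = 1) (k : ι) : e k = 0 := by
  have hx0 (j : ι) : φ (x j) ≠ 0 := (map_ne_zero_iff φ hφ).2 (hx j).ne_zero
  have hy0 (j : ι) : φ (y j) ≠ 0 := (map_ne_zero_iff φ hφ).2 fun h0 => hxy j j (h0 ▸ dvd_zero _)
  have key : (∏ j, x j ^ (e j).toNat) * ∏ j, y j ^ (-e j).toNat =
      (∏ j, x j ^ (-e j).toNat) * ∏ j, y j ^ (e j).toNat := by
    apply hφ
    simp only [div_zpow_eq_pow_toNat_div (hx0 _) (hy0 _), Finset.prod_div_distrib,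
      Finset.prod_mul_distrib] at h
    rw [div_eq_one_iff_eq (by simp [Finset.prod_ne_zero_iff, hx0, hy0])] at h
    simpa only [map_mul, map_prod, map_pow] using h
  have := eq_of_prod_pow_mul_prod_pow_eq hx hxx hxy key k
  omega

namespace Zsqrtd

theorem norm_dvd_norm {d : ℤ} {x y : ℤ√d} (h : x ∣ y) : x.norm ∣ y.norm :=
  map_dvd normMonoidHom h

instance {d : ℤ} : IsLocalHom (normMonoidHom (d := d)) :=
  ⟨fun z hz => (isUnit_iff_norm_isUnit z).2 hz⟩

theorem irreducible_of_prime_norm {d : ℤ} {z : ℤ√d} (h : Prime z.norm) : Irreducible z :=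
  Irreducible.of_map (f := normMonoidHom) h.irreducible

end Zsqrtd

namespace GaussianInt

theorem not_dvd_star_of_prime_norm {z : GaussianInt} (hz : Prime z.norm) (hodd : Odd z.norm) :
    ¬z ∣ star z := by
  intro hdvd
  have h2re : z.norm ∣ 2 * z.re := by
    have : z ∣ ((2 * z.re : ℤ) : GaussianInt) := by
      convert dvd_add dvd_rfl hdvd using 1
      ext <;> simp [two_mul]
    have := Zsqrtd.norm_dvd_norm this
    rw [Zsqrtd.norm_intCast] at this
    exact (hz.dvd_mul.1 this).elim id id
  have hre : z.norm ∣ z.re := (Int.isCoprime_two_right.2 hodd).dvd_of_dvd_mul_left h2re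
  have him : z.norm ∣ z.im := by
    have him2 : z.im * z.im = z.norm - z.re * z.re := by rw [Zsqrtd.norm_def]; ring
    have : z.norm ∣ z.im * z.im := him2 ▸ dvd_sub dvd_rfl (dvd_mul_of_dvd_left hre z.re)
    exact (hz.dvd_mul.1 this).elim id id
  have hsum : z.norm * 1 = z.re * z.re + z.im * z.im := by rw [Zsqrtd.norm_def]; ring
  have : z.norm * z.norm ∣ z.norm * 1 := hsum ▸ dvd_add (mul_dvd_mul hre hre) (mul_dvd_mul him him)
  exact hz.not_isUnit (isUnit_of_dvd_one ((mul_dvd_mul_iff_left hz.ne_zero).1 this))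

end GaussianInt

theorem stmt1_general (n : ℕ) (p : Fin n → ℕ) (hp : ∀ j, (p j).Prime)
    (h4 : ∀ j, p j % 4 = 1) (hinj : Function.Injective p)
    (a b : Fin n → ℤ)
    (hab : ∀ j, a j ^ 2 + b j ^ 2 = (p j : ℤ))
    (e : Fin n → ℤ)
    (h : ∏ j, (((a j : ℂ) + (b j : ℂ) * Complex.I) /
        ((a j : ℂ) - (b j : ℂ) * Complex.I)) ^ (e j) = 1) :
    ∀ j, e j = 0 := by
  set z : Fin n → GaussianInt := fun j => ⟨a j, b j⟩
  have norm_z (j : Fin n) : (z j).norm = p j := by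
    rw [Zsqrtd.norm_def, ← hab j]; ring
  have prime_norm (j : Fin n) : Prime (z j).norm := norm_z j ▸ Nat.prime_iff_prime_int.1 (hp j)
  have eq_of_dvd {j k : Fin n} {w : GaussianInt} (hw : w.norm = p k) (hd : z j ∣ w) : j = k := by
    have := Zsqrtd.norm_dvd_norm hd
    rw [norm_z, hw, Int.natCast_dvd_natCast] at this
    exact hinj ((Nat.prime_dvd_prime_iff_eq (hp j) (hp k)).1 this)
  refine eq_zero_of_prod_div_zpow_eq_one GaussianInt.toComplex GaussianInt.toComplex_injective
    (x := z) (y := fun j => star (z j))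
    (fun j => (Zsqrtd.irreducible_of_prime_norm (prime_norm j)).prime)
    (fun j k hjk hd => hjk (eq_of_dvd (norm_z k) hd)) ?_ ?_
  · intro j k hd
    obtain rfl := eq_of_dvd ((Zsqrtd.norm_conj _).trans (norm_z k)) hd
    refine GaussianInt.not_dvd_star_of_prime_norm (prime_norm j) ?_ hd
    rw [norm_z]
    exact (Nat.odd_iff.2 (by have := h4 j; omega)).natCast
  · simpa [z, GaussianInt.toComplex_def', GaussianInt.toComplex_star, sub_eq_add_neg] using h

/-- Multiplicative independence of the numbers `qⱼ = (aⱼ + i bⱼ)/(aⱼ - i bⱼ)` arising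
from distinct primes `pⱼ ≡ 1 (mod 4)` with `pⱼ = aⱼ² + bⱼ²`. -/
theorem stmt1 (n : ℕ) (p : Fin n → ℕ) (hp : ∀ j, (p j).Prime)
    (h4 : ∀ j, p j % 4 = 1) (hinj : Function.Injective p)
    (a b : Fin n → ℤ) (ha : ∀ j, 0 < a j) (hb : ∀ j, 0 < b j)
    (hab : ∀ j, a j ^ 2 + b j ^ 2 = (p j : ℤ))
    (e : Fin n → ℤ)
    (h : ∏ j, (((a j : ℂ) + (b j : ℂ) * Complex.I) /
        ((a j : ℂ) - (b j : ℂ) * Complex.I)) ^ (e j) = 1) :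
    ∀ j, e j = 0 :=
  stmt1_general n p hp h4 hinj a b hab e h
end

section
/- The conclusion of the previous bounded-witness lemma can fail for non-strict inequalities: the statement 'for all x ∈ [−1,1] there exists y ∈ ℝ with x²(1 − x·y) ≤ 0' is true, but for every constant C the statement 'for all x ∈ [−1,1] there exists y ∈ [−C, C] with x²(1 − x·y) ≤ 0' is false. -/
theorem sq_mul_one_sub_mul_inv_self {K : Type*} [Field K] (x : K) :
    x ^ 2 * (1 - x * x⁻¹) = 0 := by
  rcases eq_or_ne x 0 with rfl | hx
  · simp
  · simp [hx]

theorem sq_mul_one_sub_mul_pos {K : Type*} [Field K] [LinearOrder K] [IsStrictOrderedRing K]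
    {x y : K} (hx : x ≠ 0) (hxy : x * y < 1) : 0 < x ^ 2 * (1 - x * y) :=
  mul_pos (sq_pos_of_ne_zero hx) (sub_pos.mpr hxy)

theorem exists_mem_Ioc_forall_le_mul_lt_one {K : Type*} [Field K] [LinearOrder K]
    [IsStrictOrderedRing K] (C : K) : ∃ x ∈ Set.Ioc (0 : K) 1, ∀ y ≤ C, x * y < 1 := by
  have hpos : 0 < |C| + 1 := by positivity
  refine ⟨1 / (|C| + 1), ⟨by positivity, ?_⟩, fun y hy => ?_⟩
  · rw [div_le_one hpos]
    linarith [abs_nonneg C]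
  · rw [one_div_mul_eq_div, div_lt_one hpos]
    linarith [le_abs_self C]

/-- The bounded-witness lemma fails for non-strict inequalities:
`∀ x ∈ [-1,1], ∃ y, x²(1 - xy) ≤ 0` is true, but for every `C` the statement
`∀ x ∈ [-1,1], ∃ y ∈ [-C,C], x²(1 - xy) ≤ 0` is false. -/
theorem stmt6 :
    (∀ x ∈ Set.Icc (-1 : ℝ) 1, ∃ y : ℝ, x ^ 2 * (1 - x * y) ≤ 0) ∧
    (∀ C : ℝ, ¬ ∀ x ∈ Set.Icc (-1 : ℝ) 1, ∃ y ∈ Set.Icc (-C) C, x ^ 2 * (1 - x * y) ≤ 0) := by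
  refine ⟨fun x _ => ⟨x⁻¹, (sq_mul_one_sub_mul_inv_self x).le⟩, fun C h => ?_⟩
  obtain ⟨x, ⟨hx_pos, hx_le⟩, hx_mul⟩ := exists_mem_Ioc_forall_le_mul_lt_one C
  obtain ⟨y, hy, hxy⟩ := h x ⟨by linarith, hx_le⟩
  exact (sq_mul_one_sub_mul_pos hx_pos.ne' (hx_mul y hy.2)).not_ge hxy
end

section
/- Let K be a compact metric space, let F : K → 𝒦(M) be a Hausdorff-continuous map into nonempty compact subsets of a metric space M, and let g : K × M → ℝ be continuous. Then the function h(x) = max_{y ∈ F(x)} g(x, y) is well-defined and continuous on K. -/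
open TopologicalSpace Set

/-
Berge's maximum theorem. The sets `g (x, ·) '' F x` depend continuously on `x` in the Vietoris
topology, and the supremum of a nonempty compact subset of a linear order is a continuous function
of the set: it exceeds `a` iff the set meets `Ioi a` and lies below `b` iff the set is contained in
`Iio b`, both Vietoris-open conditions. The Hausdorff metric on `NonemptyCompacts M` induces the
Vietoris topology, so this applies to a Hausdorff-continuous `F`.
-/

namespace TopologicalSpace.NonemptyCompacts

theorem continuous_sSup {α : Type*} [ConditionallyCompleteLinearOrder α] [TopologicalSpace α]
    [OrderTopology α] : Continuous fun K : NonemptyCompacts α => sSup (K : Set α) := by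
  refine continuous_iff_continuousAt.2 fun K => tendsto_order.2 ⟨fun a ha => ?_, fun b hb => ?_⟩
  · have hK : ((K : Set α) ∩ Ioi a).Nonempty := ⟨_, K.isCompact.sSup_mem K.nonempty, ha⟩
    filter_upwards [(isOpen_inter_nonempty_of_isOpen isOpen_Ioi).mem_nhds hK]
      with L ⟨y, hyL, hay⟩
    exact hay.trans_le (le_csSup L.isCompact.bddAbove hyL)
  · have hK : (K : Set α) ⊆ Iio b := fun y hy => (le_csSup K.isCompact.bddAbove hy).trans_lt hb
    filter_upwards [(isOpen_subsets_of_isOpen isOpen_Iio).mem_nhds hK] with L hL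
    exact hL (L.isCompact.sSup_mem L.nonempty)

end TopologicalSpace.NonemptyCompacts

theorem Continuous.sSup_image_nonemptyCompacts {X Y α : Type*} [TopologicalSpace X]
    [TopologicalSpace Y] [ConditionallyCompleteLinearOrder α] [TopologicalSpace α]
    [OrderTopology α] {F : X → NonemptyCompacts Y} {g : X → Y → α} (hF : Continuous F)
    (hg : Continuous (Function.uncurry g)) :
    Continuous fun x => sSup (g x '' (F x : Set Y)) := by
  simpa only [Function.comp_def, NonemptyCompacts.coe_map] using
    NonemptyCompacts.continuous_sSup.comp (hF.nonemptyCompacts_map' hg)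

theorem stmt10_general {K M : Type*} [MetricSpace K] [MetricSpace M]
    (F : K → NonemptyCompacts M) (hF : Continuous F)
    (g : K × M → ℝ) (hg : Continuous g) :
    (∀ x : K, ∃ y ∈ (F x : Set M),
      IsGreatest ((fun y => g (x, y)) '' (F x : Set M)) (g (x, y))) ∧
    Continuous (fun x : K => sSup ((fun y => g (x, y)) '' (F x : Set M))) := by
  refine ⟨fun x => ?_, hF.sSup_image_nonemptyCompacts hg⟩
  obtain ⟨_, hmax⟩ :=
    ((F x).isCompact.image (hg.comp (Continuous.prodMk_right x))).exists_isGreatest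
      ((F x).nonempty.image _)
  obtain ⟨y, hy, rfl⟩ := hmax.1
  exact ⟨y, hy, hmax⟩

/-- For `K` a compact metric space, `F : K → 𝒦(M)` Hausdorff-continuous and
`g : K × M → ℝ` continuous, the value function `h(x) = max_{y ∈ F(x)} g(x, y)` is
well-defined (the maximum is attained) and continuous. -/
theorem stmt10 {K M : Type*} [MetricSpace K] [CompactSpace K] [MetricSpace M]
    (F : K → NonemptyCompacts M) (hF : Continuous F)
    (g : K × M → ℝ) (hg : Continuous g) :
    (∀ x : K, ∃ y ∈ (F x : Set M),
      IsGreatest ((fun y => g (x, y)) '' (F x : Set M)) (g (x, y))) ∧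
    Continuous (fun x : K => sSup ((fun y => g (x, y)) '' (F x : Set M))) :=
  stmt10_general F hF g hg
end

section
/- Let A ∈ ℝ^{n×n} be diagonalizable over ℂ with all eigenvalues of modulus exactly 1, say A = Q diag(λ₁,…,λₙ) Q⁻¹. Let S ⊆ 𝕋ⁿ be the closure of {(λ₁ᵏ,…,λₙᵏ) : k ∈ ℕ}. Then for any x ∈ ℝⁿ, the closure of the orbit {Aᵏ x : k ∈ ℕ} equals {Q diag(z₁,…,zₙ) Q⁻¹ x : (z₁,…,zₙ) ∈ S}. -/
/-!
Since `A = Q diag(λ) Q⁻¹`, we have `Aᵏ = Q diag(λᵏ) Q⁻¹`, so the orbit is the image of the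
power set `{λᵏ}` under the continuous twist `z ↦ Q diag(z) Q⁻¹ x`. The power set lies in the
torus, so its closure is compact, and a continuous map into a Hausdorff space commutes with
taking the closure of a set with compact closure.
-/

open Matrix Set

theorem Matrix.conj_diagonal_pow {n R : Type*} [Fintype n] [DecidableEq n] [CommRing R]
    {Q : Matrix n n R} (hQ : IsUnit Q.det) (d : n → R) (k : ℕ) :
    (Q * diagonal d * Q⁻¹) ^ k = Q * diagonal (d ^ k) * Q⁻¹ := by
  rw [← diagonal_pow]
  exact Units.conj_pow (Q.nonsingInvUnit hQ) _ k

theorem isBounded_setOf_pow_of_norm_le_one {ι 𝕜 : Type*} [Fintype ι] [NormedDivisionRing 𝕜]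
    {d : ι → 𝕜} (hd : ∀ i, ‖d i‖ ≤ 1) :
    Bornology.IsBounded {w : ι → 𝕜 | ∃ k : ℕ, w = fun i => d i ^ k} := by
  refine (Metric.isBounded_closedBall (x := 0) (r := 1)).subset ?_
  rintro _ ⟨k, rfl⟩
  simpa [pi_norm_le_iff_of_nonneg] using fun i => pow_le_one₀ (norm_nonneg _) (hd i)

/-- For a real matrix `A` diagonalizable over `ℂ` as `Q diag(λ) Q⁻¹` with all
eigenvalues of modulus 1, the closure of the orbit `{Aᵏ x}` equals the image of the
closure `S` of the power sequence `{(λ₁ᵏ,…,λₙᵏ)}` under the diagonal twists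
`z ↦ Q diag(z) Q⁻¹ x`. -/
theorem stmt16 {n : ℕ} (A : Matrix (Fin n) (Fin n) ℝ)
    (Q : Matrix (Fin n) (Fin n) ℂ) (hQ : IsUnit Q.det)
    (lam : Fin n → ℂ) (hlam : ∀ i, ‖lam i‖ = 1)
    (hA : A.map (Complex.ofReal ·) = Q * Matrix.diagonal lam * Q⁻¹)
    (x : Fin n → ℝ) :
    closure {v : Fin n → ℂ |
        ∃ k : ℕ, v = ((A ^ k).map (Complex.ofReal ·)).mulVec (fun i => (x i : ℂ))} =
      {v : Fin n → ℂ |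
        ∃ z ∈ closure {w : Fin n → ℂ | ∃ k : ℕ, w = fun i => lam i ^ k},
          v = (Q * Matrix.diagonal z * Q⁻¹).mulVec (fun i => (x i : ℂ))} := by
  set twist : (Fin n → ℂ) → Fin n → ℂ :=
    fun z => (Q * diagonal z * Q⁻¹) *ᵥ fun i => (x i : ℂ)
  set powers := {w : Fin n → ℂ | ∃ k : ℕ, w = fun i => lam i ^ k}
  have hpow (k : ℕ) :
      (A ^ k).map (Complex.ofReal ·) = Q * diagonal (fun i => lam i ^ k) * Q⁻¹ := by
    rw [← Pi.pow_def, ← conj_diagonal_pow hQ, ← hA]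
    exact map_pow Complex.ofRealHom.mapMatrix A k
  have horbit : {v : Fin n → ℂ |
      ∃ k : ℕ, v = ((A ^ k).map (Complex.ofReal ·)) *ᵥ fun i => (x i : ℂ)} = twist '' powers := by
    ext v
    simp [powers, twist, hpow, eq_comm]
  have hcompact : IsCompact (closure powers) :=
    (isBounded_setOf_pow_of_norm_le_one fun i => (hlam i).le).isCompact_closure
  have htwist : Continuous twist := by fun_prop
  rw [horbit, ← image_closure_of_isCompact hcompact htwist.continuousOn]
  ext v
  simp [twist, eq_comm]
end
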